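/- arXiv:1808.00181 — 2 statements merged into one kernel-verified Lean document; each statement's English description precedes it below -/
import Mathlib

section
/- Let A be a positive definite n×n complex matrix and X an n×n complex matrix. If ||A + X* A⁻¹ X|| = ||A + X A⁻¹ X*||, then for every Hermitian B with B ≥ X* A⁻¹ X one has ||[[A, X], [X*, B]]|| ≤ ||A + B||, and for every Hermitian C with C ≥ X A⁻¹ X* one has ||[[A, X*], [X, C]]|| ≤ ||A + C||. -/
/-!
Write `M = [[A, X], [X*, B]]`. Since `B ≥ X* A⁻¹ X`, the Schur complement of `A` in `M` is
positive semidefinite, so `M ≥ 0`. Moreover `diag(A + X A⁻¹ X*, A + B) - M = [[X A⁻¹ X*, -X], [-X*, A]]`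
has vanishing Schur complement with respect to `A`, so `M ≤ diag(A + X A⁻¹ X*, A + B)` and
`‖M‖ ≤ max ‖A + X A⁻¹ X*‖ ‖A + B‖`. By hypothesis `‖A + X A⁻¹ X*‖ = ‖A + X* A⁻¹ X‖`, which is at
most `‖A + B‖` by monotonicity of the norm on positive matrices. The second claim is the first
one applied to `X*`.
-/

open scoped Matrix ComplexOrder

/-- The operator norm (largest singular value) of a square complex matrix. -/
noncomputable def opNorm {m : Type*} [Fintype m] [DecidableEq m] (M : Matrix m m ℂ) : ℝ :=
  ‖Matrix.toEuclideanCLM (𝕜 := ℂ) M‖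

namespace Matrix

open scoped Matrix.Norms.L2Operator MatrixOrder

variable {𝕜 : Type*} [RCLike 𝕜] {m n : Type*} [Fintype m] [Fintype n]

theorem PosSemidef.fromBlocks_zero_zero {P : Matrix m m 𝕜} {Q : Matrix n n 𝕜}
    (hP : P.PosSemidef) (hQ : Q.PosSemidef) : (fromBlocks P 0 0 Q).PosSemidef := by
  rw [posSemidef_iff_dotProduct_mulVec] at *
  refine ⟨hP.1.fromBlocks (by simp) hQ.1, fun x => ?_⟩
  rw [← Sum.elim_comp_inl_inr x, fromBlocks_mulVec]
  simp only [zero_mulVec, add_zero, zero_add, Sum.elim_comp_inl_inr]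
  rw [← Sum.elim_comp_inl_inr (star x), sumElim_dotProduct_sumElim]
  exact add_nonneg (hP.2 _) (hQ.2 _)

variable [DecidableEq m] [DecidableEq n]

theorem fromBlocks_zero_zero_le_algebraMap {P : Matrix m m 𝕜} {Q : Matrix n n 𝕜} {r : ℝ}
    (hP : P ≤ algebraMap ℝ _ r) (hQ : Q ≤ algebraMap ℝ _ r) :
    fromBlocks P 0 0 Q ≤ algebraMap ℝ _ r := by
  rw [le_iff]
  convert PosSemidef.fromBlocks_zero_zero hP hQ using 1
  ext (i | i) (j | j) <;> simp [algebraMap_eq_diagonal, diagonal_apply]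

theorem fromBlocks_le_fromBlocks_add_mul_inv_mul {A : Matrix m m 𝕜} (hA : A.PosDef)
    (X B : Matrix m m 𝕜) :
    fromBlocks A X Xᴴ B ≤ fromBlocks (A + X * A⁻¹ * Xᴴ) 0 0 (A + B) := by
  have := hA.isUnit.invertible
  have hgap : fromBlocks (A + X * A⁻¹ * Xᴴ) 0 0 (A + B) - fromBlocks A X Xᴴ B =
      fromBlocks (X * A⁻¹ * Xᴴ) (-X) (-X)ᴴ A := by
    rw [sub_eq_iff_eq_add, fromBlocks_add, conjTranspose_neg]
    congr 1 <;> abel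
  rw [le_iff, hgap, PosDef.fromBlocks₂₂ _ _ hA]
  simpa using PosSemidef.zero

theorem norm_fromBlocks_le_max {A X B : Matrix m m ℂ} (hA : A.PosDef)
    (hB : Xᴴ * A⁻¹ * X ≤ B) :
    ‖fromBlocks A X Xᴴ B‖ ≤ max ‖A + X * A⁻¹ * Xᴴ‖ ‖A + B‖ := by
  have := hA.isUnit.invertible
  have hM : 0 ≤ fromBlocks A X Xᴴ B := ((PosDef.fromBlocks₁₁ X B hA).2 (le_iff.mp hB)).nonneg
  have hA₀ : 0 ≤ A := hA.posSemidef.nonneg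
  have hB₀ : 0 ≤ B := (hA.inv.posSemidef.conjTranspose_mul_mul_same X).nonneg.trans hB
  rw [CStarAlgebra.norm_le_iff_le_algebraMap _ (le_max_of_le_left (norm_nonneg _)) hM]
  refine (fromBlocks_le_fromBlocks_add_mul_inv_mul hA X B).trans
    (fromBlocks_zero_zero_le_algebraMap ?_ ?_)
  · exact (IsSelfAdjoint.le_algebraMap_norm_self
      (hA.posSemidef.add (hA.inv.posSemidef.mul_mul_conjTranspose_same X)).isHermitian).trans
      (algebraMap_mono _ (le_max_left _ _))
  · exact (IsSelfAdjoint.le_algebraMap_norm_self (.of_nonneg (add_nonneg hA₀ hB₀))).trans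
      (algebraMap_mono _ (le_max_right _ _))

theorem norm_fromBlocks_le_norm_add {A X B : Matrix m m ℂ} (hA : A.PosDef)
    (hX : ‖A + X * A⁻¹ * Xᴴ‖ ≤ ‖A + Xᴴ * A⁻¹ * X‖) (hB : Xᴴ * A⁻¹ * X ≤ B) :
    ‖fromBlocks A X Xᴴ B‖ ≤ ‖A + B‖ := by
  have hXAX : 0 ≤ A + Xᴴ * A⁻¹ * X :=
    (hA.posSemidef.add (hA.inv.posSemidef.conjTranspose_mul_mul_same X)).nonneg
  refine (norm_fromBlocks_le_max hA hB).trans (max_le (hX.trans ?_) le_rfl)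
  exact CStarAlgebra.norm_le_norm_of_nonneg_of_le hXAX (add_le_add_right hB A)

end Matrix

theorem stmt_4 {n : ℕ} (A X : Matrix (Fin n) (Fin n) ℂ) (hA : A.PosDef)
    (hαβ : opNorm (A + Xᴴ * A⁻¹ * X) = opNorm (A + X * A⁻¹ * Xᴴ)) :
    (∀ B : Matrix (Fin n) (Fin n) ℂ, B.IsHermitian → (B - Xᴴ * A⁻¹ * X).PosSemidef →
      opNorm (Matrix.fromBlocks A X Xᴴ B) ≤ opNorm (A + B)) ∧
    (∀ C : Matrix (Fin n) (Fin n) ℂ, C.IsHermitian → (C - X * A⁻¹ * Xᴴ).PosSemidef →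
      opNorm (Matrix.fromBlocks A Xᴴ X C) ≤ opNorm (A + C)) := by
  -- `opNorm` is definitionally the norm of the scoped instance `Matrix.Norms.L2Operator`,
  -- and `(B - Y).PosSemidef` is definitionally `Y ≤ B` in `MatrixOrder`.
  refine ⟨fun B _ hB => Matrix.norm_fromBlocks_le_norm_add hA hαβ.ge hB, fun C _ hC => ?_⟩
  have h := Matrix.norm_fromBlocks_le_norm_add (X := Xᴴ) (B := C) hA
  simp only [Matrix.conjTranspose_conjTranspose] at h
  exact h hαβ.le hC
end

section
/- Let A be a positive definite n×n complex matrix and X an n×n complex matrix. Then at least one of the following holds: (1) for every Hermitian B with B ≥ X* A⁻¹ X, ||[[A, X], [X*, B]]|| ≤ ||A + B||; or (2) for every Hermitian C with C ≥ X A⁻¹ X*, ||[[A, X*], [X, C]]|| ≤ ||A + C||. -/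
open scoped Matrix ComplexOrder

/-!
By symmetry under `X ↦ Xᴴ` we may assume `‖A + X A⁻¹ Xᴴ‖ ≤ ‖A + Xᴴ A⁻¹ X‖`, and prove the first
alternative. Let `B ≥ Xᴴ A⁻¹ X`, so `M = [[A, X], [Xᴴ, B]] ≥ 0`, and let `s > t = ‖A + B‖`.
Since `‖A + X A⁻¹ Xᴴ‖ ≤ ‖A + Xᴴ A⁻¹ X‖ ≤ t < s`, the matrix `s - A - X A⁻¹ Xᴴ` is positive
definite (taking `s > t` strictly makes `s - A` invertible). Hence `[[s - A, X], [Xᴴ, A]] ≥ 0`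
(Schur complement at `A`), hence `Xᴴ (s - A)⁻¹ X ≤ A ≤ s - B` (Schur complement at `s - A`).
This is the Schur complement condition for `s - M = [[s - A, -X], [-Xᴴ, s - B]] ≥ 0`,
i.e. `‖M‖ ≤ s`.
-/

open scoped MatrixOrder Matrix.Norms.L2Operator

namespace Matrix

variable {m 𝕜 : Type*} [Fintype m] [DecidableEq m] [RCLike 𝕜]

theorem fromBlocks_le_fromBlocks_zero_zero {A X B S : Matrix m m 𝕜} (hA : A.PosDef)
    (hS : (S - (A + X * A⁻¹ * Xᴴ)).PosDef) (hAB : A + B ≤ S) :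
    fromBlocks A X Xᴴ B ≤ fromBlocks S 0 0 S := by
  have hSA : (S - A).PosDef := by
    simpa only [sub_add_eq_sub_sub, sub_add_cancel]
      using hS.add_posSemidef (hA.inv.posSemidef.mul_mul_conjTranspose_same X)
  have := hA.isUnit.invertible
  have := hSA.isUnit.invertible
  have hXSAX : Xᴴ * (S - A)⁻¹ * X ≤ A := by
    refine (PosDef.fromBlocks₁₁ X A hSA).mp ((PosDef.fromBlocks₂₂ _ X hA).mpr ?_)
    simpa only [sub_sub] using hS.posSemidef
  rw [le_iff, sub_eq_add_neg, fromBlocks_neg, fromBlocks_add, ← conjTranspose_neg, zero_add,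
    zero_add, ← sub_eq_add_neg, ← sub_eq_add_neg, PosDef.fromBlocks₁₁ _ _ hSA]
  simpa only [conjTranspose_neg, neg_mul, mul_neg, neg_neg, ← le_iff, le_sub_iff_add_le]
    using (add_le_add_left hXSAX B).trans hAB

theorem algebraMap_eq_fromBlocks {R α : Type*} [CommSemiring R] [Semiring α] [Algebra R α]
    (r : R) : algebraMap R (Matrix (m ⊕ m) (m ⊕ m) α) r =
      fromBlocks (algebraMap R _ r) 0 0 (algebraMap R _ r) := by
  simp only [algebraMap_eq_diagonal, fromBlocks_diagonal]
  congr 1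
  ext (i | i) <;> rfl

theorem opNorm_eq_norm (M : Matrix m m ℂ) : opNorm M = ‖M‖ := rfl

theorem opNorm_fromBlocks_le_opNorm_add {A X B : Matrix m m ℂ} (hA : A.PosDef)
    (hX : opNorm (A + X * A⁻¹ * Xᴴ) ≤ opNorm (A + Xᴴ * A⁻¹ * X)) (hB : Xᴴ * A⁻¹ * X ≤ B) :
    opNorm (fromBlocks A X Xᴴ B) ≤ opNorm (A + B) := by
  simp only [opNorm_eq_norm] at hX ⊢
  have := hA.isUnit.invertible
  have hA0 : 0 ≤ A := hA.posSemidef.nonneg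
  have hXAX : 0 ≤ Xᴴ * A⁻¹ * X := (hA.inv.posSemidef.conjTranspose_mul_mul_same X).nonneg
  have hXAXh : 0 ≤ X * A⁻¹ * Xᴴ := (hA.inv.posSemidef.mul_mul_conjTranspose_same X).nonneg
  have hM : 0 ≤ fromBlocks A X Xᴴ B := ((PosDef.fromBlocks₁₁ X B hA).mpr hB).nonneg
  have hle : ‖A + X * A⁻¹ * Xᴴ‖ ≤ ‖A + B‖ :=
    hX.trans (CStarAlgebra.norm_le_norm_of_nonneg_of_le (add_nonneg hA0 hXAX)
      (add_le_add_right hB A))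
  refine le_of_forall_gt_imp_ge_of_dense fun s hs => ?_
  rw [CStarAlgebra.norm_le_iff_le_algebraMap _ ((norm_nonneg _).trans hs.le) hM,
    algebraMap_eq_fromBlocks]
  refine fromBlocks_le_fromBlocks_zero_zero hA ?_
    (IsSelfAdjoint.le_algebraMap_norm_self (.of_nonneg (add_nonneg hA0 (hXAX.trans hB)))
      |>.trans (algebraMap_mono _ hs.le))
  rw [← isStrictlyPositive_iff_posDef,
    ← sub_add_sub_cancel _ (algebraMap ℝ _ ‖A + X * A⁻¹ * Xᴴ‖), ← map_sub]
  exact (isStrictlyPositive_algebraMap (sub_pos.mpr (hle.trans_lt hs))).add_nonneg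
    (sub_nonneg.mpr (IsSelfAdjoint.le_algebraMap_norm_self (.of_nonneg (add_nonneg hA0 hXAXh))))

end Matrix

theorem stmt_5 {n : ℕ} (A X : Matrix (Fin n) (Fin n) ℂ) (hA : A.PosDef) :
    (∀ B : Matrix (Fin n) (Fin n) ℂ, B.IsHermitian → (B - Xᴴ * A⁻¹ * X).PosSemidef →
      opNorm (Matrix.fromBlocks A X Xᴴ B) ≤ opNorm (A + B)) ∨
    (∀ C : Matrix (Fin n) (Fin n) ℂ, C.IsHermitian → (C - X * A⁻¹ * Xᴴ).PosSemidef →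
      opNorm (Matrix.fromBlocks A Xᴴ X C) ≤ opNorm (A + C)) := by
  rcases le_total (opNorm (A + X * A⁻¹ * Xᴴ)) (opNorm (A + Xᴴ * A⁻¹ * X)) with h | h
  · exact .inl fun B _ hB => Matrix.opNorm_fromBlocks_le_opNorm_add hA h hB
  · refine .inr fun C _ hC => ?_
    have h' : opNorm (A + Xᴴ * A⁻¹ * Xᴴᴴ) ≤ opNorm (A + Xᴴᴴ * A⁻¹ * Xᴴ) := by
      rwa [Matrix.conjTranspose_conjTranspose]
    have hC' : Xᴴᴴ * A⁻¹ * Xᴴ ≤ C := by rwa [Matrix.conjTranspose_conjTranspose]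
    simpa only [Matrix.conjTranspose_conjTranspose]
      using Matrix.opNorm_fromBlocks_le_opNorm_add hA h' hC'
end
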